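/- Let M be a real convex monoid. For every m ∈ M, the invertible fraction IF(m) equals the supremum of the set of α ∈ [0,1] such that m = α m₁ + (1−α) m₂ for some weakly invertible m₁ ∈ M and some m₂ ∈ M, where α m₁ + (1−α) m₂ denotes π(α δ^{m₁} + (1−α) δ^{m₂}). -/
import Mathlib

open Finsupp
open scoped Classical NNReal

/-- `p` is a finitely supported distribution: its values sum to `1`. -/
def IsDist {R X : Type*} [CommSemiring R] (p : X →₀ R) : Prop :=
  p.sum (fun _ r => r) = 1

/-- Convolution: `(q ∗ p)(m) = ∑_{g₂·g₁ = m} q(g₂) p(g₁)`. -/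
noncomputable def dconv {R M : Type*} [CommSemiring R] [Monoid M]
    (q p : M →₀ R) : M →₀ R :=
  q.sum fun g₂ b => p.sum fun g₁ a => Finsupp.single (g₂ * g₁) (b * a)

/-- The invertible support of `m`. -/
def Isupp {M : Type*} [Monoid M]
    (pm : (M →₀ ℝ≥0) → M) (m : M) : Set M :=
  {m' | IsUnit m' ∧ ∃ P : M →₀ ℝ≥0, IsDist P ∧ pm P = m ∧ P m' ≠ 0}

/-- `m` is weakly invertible if it is the image under `pm` of a distribution supported
on the units. -/
def WeaklyInv {M : Type*} [Monoid M]
    (pm : (M →₀ ℝ≥0) → M) (m : M) : Prop :=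
  ∃ p : M →₀ ℝ≥0, IsDist p ∧ (∀ x ∈ p.support, IsUnit x) ∧ pm p = m

/-- The total mass a distribution puts on the units of `M`. -/
noncomputable def unitMass {M : Type*} [Monoid M] (P : M →₀ ℝ≥0) : ℝ≥0 :=
  P.sum fun m' r => if IsUnit m' then r else 0

/-- The invertible fraction `IF(m) = sup {∑_{m'∈M*} P(m') : P ∈ D(M), pm(P) = m}`. -/
noncomputable def IF {M : Type*} [Monoid M]
    (pm : (M →₀ ℝ≥0) → M) (m : M) : ℝ≥0 :=
  sSup {s : ℝ≥0 | ∃ P : M →₀ ℝ≥0, IsDist P ∧ pm P = m ∧ s = unitMass P}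

section Aux
set_option linter.unusedSectionVars false
variable {M : Type*} [Monoid M]

lemma sum_id_add {X : Type*} (f g : X →₀ ℝ≥0) :
    (f + g).sum (fun _ r => r) = f.sum (fun _ r => r) + g.sum (fun _ r => r) :=
  Finsupp.sum_add_index' (fun _ => rfl) (fun _ _ _ => rfl)

lemma sum_id_smul {X : Type*} (a : ℝ≥0) (f : X →₀ ℝ≥0) :
    (a • f).sum (fun _ r => r) = a * f.sum (fun _ r => r) := by
  rw [Finsupp.sum_smul_index (fun _ => rfl), Finsupp.mul_sum]

lemma isDist_single (x : M) : IsDist (Finsupp.single x (1 : ℝ≥0)) := by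
  simp [IsDist]

lemma unitMass_add (f g : M →₀ ℝ≥0) :
    unitMass (f + g) = unitMass f + unitMass g :=
  Finsupp.sum_add_index' (fun a => by simp) (fun a b₁ b₂ => by split <;> simp)

lemma unitMass_smul (a : ℝ≥0) (f : M →₀ ℝ≥0) :
    unitMass (a • f) = a * unitMass f := by
  unfold unitMass
  rw [Finsupp.sum_smul_index (fun i => by simp), Finsupp.mul_sum]
  refine Finsupp.sum_congr fun x _ => ?_
  split <;> simp

lemma unitMass_le_one {P : M →₀ ℝ≥0} (h : IsDist P) : unitMass P ≤ 1 := by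
  rw [← h]
  refine Finset.sum_le_sum fun i _ => ?_
  simp only []
  split <;> simp

lemma unitMass_of_support_units {p : M →₀ ℝ≥0} (h : ∀ x ∈ p.support, IsUnit x) :
    unitMass p = p.sum fun _ r => r :=
  Finset.sum_congr rfl fun x hx => if_pos (h x hx)

lemma unitMass_eq_filter_sum (P : M →₀ ℝ≥0) :
    unitMass P = (P.filter IsUnit).sum fun _ r => r := by
  rw [Finsupp.sum_filter_index]
  unfold unitMass Finsupp.sum
  rw [Finsupp.support_filter, Finset.sum_filter]

/-- The key mixing computation. -/
lemma mix_eq {M : Type*} [Monoid M] (pm : (M →₀ ℝ≥0) → M)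
    (hμ : ∀ Q : (M →₀ ℝ≥0) →₀ ℝ≥0, IsDist Q → (∀ p ∈ Q.support, IsDist p) →
      pm (Q.sum fun p r => r • p) = pm (Finsupp.mapDomain pm Q))
    {p q : M →₀ ℝ≥0} (hp : IsDist p) (hq : IsDist q) {α : ℝ≥0} (hα : α ≤ 1) :
    pm (α • p + (1 - α) • q)
      = pm (Finsupp.single (pm p) α + Finsupp.single (pm q) (1 - α)) := by
  set Q : (M →₀ ℝ≥0) →₀ ℝ≥0 := Finsupp.single p α + Finsupp.single q (1 - α) with hQ
  have hQsum : (Q.sum fun p r => r • p) = α • p + (1 - α) • q := by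
    have h1 : (Q.sum fun p r => r • p)
        = ((Finsupp.single p α).sum fun p r => r • p)
          + ((Finsupp.single q (1 - α)).sum fun p r => r • p) := by
      rw [hQ]
      exact Finsupp.sum_add_index' (fun a => zero_smul ℝ≥0 a)
        (fun a b₁ b₂ => add_smul b₁ b₂ a)
    rw [h1, Finsupp.sum_single_index (zero_smul ℝ≥0 p), Finsupp.sum_single_index (zero_smul ℝ≥0 q)]
  have hQdist : IsDist Q := by
    unfold IsDist
    rw [hQ, sum_id_add, Finsupp.sum_single_index rfl, Finsupp.sum_single_index rfl]
    exact add_tsub_cancel_of_le hα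
  have hQsupp : ∀ r ∈ Q.support, IsDist r := by
    intro r hr
    have := Finsupp.support_add hr
    rcases Finset.mem_union.1 this with h | h
    · have := Finsupp.support_single_subset h
      simp only [Finset.mem_singleton] at this
      rwa [this]
    · have := Finsupp.support_single_subset h
      simp only [Finset.mem_singleton] at this
      rwa [this]
  have := hμ Q hQdist hQsupp
  rw [hQsum] at this
  rw [this, hQ, Finsupp.mapDomain_add, Finsupp.mapDomain_single, Finsupp.mapDomain_single]

end Aux

/-- In a real convex monoid, the invertible fraction `IF(m)` equals the supremum of
`α ∈ [0,1]` such that `m = α m₁ + (1-α) m₂` (i.e. `m = pm(α δ^{m₁} + (1-α) δ^{m₂})`)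
for some weakly invertible `m₁` and some `m₂`. -/
theorem IF_eq_sup_convex_decomposition {M : Type*} [Monoid M]
    (pm : (M →₀ ℝ≥0) → M)
    (hδ : ∀ m : M, pm (Finsupp.single m 1) = m)
    (hμ : ∀ Q : (M →₀ ℝ≥0) →₀ ℝ≥0, IsDist Q → (∀ p ∈ Q.support, IsDist p) →
      pm (Q.sum fun p r => r • p) = pm (Finsupp.mapDomain pm Q))
    (hmul : ∀ p q : M →₀ ℝ≥0, IsDist p → IsDist q → pm (dconv q p) = pm q * pm p)
    (m : M) :
    IF pm m = sSup {α : ℝ≥0 | α ≤ 1 ∧ ∃ m₁ m₂ : M, WeaklyInv pm m₁ ∧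
      m = pm (Finsupp.single m₁ α + Finsupp.single m₂ (1 - α))} := by
  set S : Set ℝ≥0 := {α : ℝ≥0 | α ≤ 1 ∧ ∃ m₁ m₂ : M, WeaklyInv pm m₁ ∧
      m = pm (Finsupp.single m₁ α + Finsupp.single m₂ (1 - α))} with hS
  set T : Set ℝ≥0 := {s : ℝ≥0 | ∃ P : M →₀ ℝ≥0, IsDist P ∧ pm P = m ∧ s = unitMass P} with hT
  have hSbdd : BddAbove S := ⟨1, fun a ha => ha.1⟩
  have hTbdd : BddAbove T := by
    refine ⟨1, fun a ha => ?_⟩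
    obtain ⟨P, hP, _, rfl⟩ := ha
    exact unitMass_le_one hP
  have hzeroS : (0 : ℝ≥0) ∈ S := by
    refine ⟨zero_le_one, 1, m, ⟨Finsupp.single 1 1, isDist_single 1, ?_, hδ 1⟩, ?_⟩
    · intro x hx
      have := Finsupp.support_single_subset hx
      simp only [Finset.mem_singleton] at this
      rw [this]; exact isUnit_one
    · rw [Finsupp.single_zero, zero_add, tsub_zero, hδ]
  have hTne : T.Nonempty := ⟨unitMass (Finsupp.single m 1), Finsupp.single m 1,
    isDist_single m, hδ m, rfl⟩
  show sSup T = sSup S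
  apply le_antisymm
  · -- each element of T belongs to S
    refine csSup_le hTne ?_
    rintro s ⟨P, hP, hPm, rfl⟩
    refine le_csSup hSbdd ?_
    set α := unitMass P with hαdef
    have hα1 : α ≤ 1 := unitMass_le_one hP
    rcases eq_or_lt_of_le hα1 with hone | hlt
    · -- α = 1 : P is supported on units
      have hsupp : ∀ x ∈ P.support, IsUnit x := by
        intro x hx
        by_contra hun
        have hsplit := Finsupp.sum_filter_add_sum_filter_not IsUnit P (fun _ r => r)
        rw [← unitMass_eq_filter_sum, ← hαdef, hone, hP] at hsplit
        have hzero : (P.filter fun a => ¬ IsUnit a).sum (fun _ r => r) = 0 := by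
          have h1 : (1 : ℝ≥0) + (P.filter fun a => ¬ IsUnit a).sum (fun _ r => r) = 1 + 0 := by
            rw [add_zero]; exact hsplit
          exact add_left_cancel h1
        have hxmem : x ∈ (P.filter fun a => ¬ IsUnit a).support := by
          rw [Finsupp.support_filter, Finset.mem_filter]
          exact ⟨hx, hun⟩
        have h2 : (P.filter fun a => ¬ IsUnit a) x = 0 :=
          (Finset.sum_eq_zero_iff.1 hzero) x hxmem
        rw [Finsupp.filter_apply_pos (p := fun a => ¬ IsUnit a) (f := P) hun] at h2
        exact (Finsupp.mem_support_iff.1 hx) h2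
      refine ⟨hα1, m, m, ⟨P, hP, hsupp, hPm⟩, ?_⟩
      rw [hone, tsub_self, Finsupp.single_zero, add_zero, hδ]
    · -- 0 ≤ α < 1
      rcases eq_or_ne α 0 with hz | hnz
      · rw [hz]; exact hzeroS
      · set u := P.filter IsUnit with hu
        set n := P.filter (fun a => ¬ IsUnit a) with hn
        have husum : u.sum (fun _ r => r) = α := (unitMass_eq_filter_sum P).symm
        have hnsum : n.sum (fun _ r => r) = 1 - α := by
          have hsplit := Finsupp.sum_filter_add_sum_filter_not IsUnit P (fun _ r => r)
          rw [hP, husum] at hsplit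
          exact eq_tsub_of_add_eq (by rw [add_comm]; exact hsplit)
        have h1α : (1 : ℝ≥0) - α ≠ 0 := (tsub_pos_of_lt hlt).ne'
        set p := α⁻¹ • u with hpdef
        set q := ((1 : ℝ≥0) - α)⁻¹ • n with hqdef
        have hpdist : IsDist p := by
          unfold IsDist
          rw [hpdef, sum_id_smul, husum, inv_mul_cancel₀ hnz]
        have hqdist : IsDist q := by
          unfold IsDist
          rw [hqdef, sum_id_smul, hnsum, inv_mul_cancel₀ h1α]
        have hrecon : α • p + (1 - α) • q = P := by
          rw [hpdef, hqdef, smul_smul, smul_smul, mul_inv_cancel₀ hnz,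
            mul_inv_cancel₀ h1α, one_smul, one_smul, hu, hn,
            Finsupp.filter_pos_add_filter_neg]
        have hmix := mix_eq pm hμ hpdist hqdist hα1
        rw [hrecon, hPm] at hmix
        refine ⟨hα1, pm p, pm q, ⟨p, hpdist, ?_, rfl⟩, hmix⟩
        intro x hx
        have hx' : x ∈ u.support := by
          have := Finsupp.support_smul hx
          exact this
        rw [hu, Finsupp.support_filter] at hx'
        exact (Finset.mem_filter.1 hx').2
  · -- each element of S is ≤ some element of T
    refine csSup_le ⟨0, hzeroS⟩ ?_
    rintro α ⟨hα1, m₁, m₂, ⟨p, hpdist, hpu, hpm⟩, hm⟩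
    set q : M →₀ ℝ≥0 := Finsupp.single m₂ 1 with hq
    have hqdist : IsDist q := isDist_single m₂
    set P := α • p + (1 - α) • q with hPdef
    have hPdist : IsDist P := by
      unfold IsDist
      rw [hPdef, sum_id_add, sum_id_smul, sum_id_smul, hpdist, hqdist, mul_one, mul_one]
      exact add_tsub_cancel_of_le hα1
    have hPm : pm P = m := by
      rw [hPdef, mix_eq pm hμ hpdist hqdist hα1, hpm, hq, hδ, ← hm]
    have hle : α ≤ unitMass P := by
      rw [hPdef, unitMass_add, unitMass_smul, unitMass_of_support_units hpu, hpdist, mul_one]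
      exact le_self_add
    exact le_trans hle (le_csSup hTbdd ⟨P, hPdist, hPm, rfl⟩)
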